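/- arXiv:1904.10315 — 3 statements merged into one kernel-verified Lean document; each statement's English description precedes it below -/
import Mathlib

section
/- Let i = √(-1) and L(q) = (4iq + √(1-8q))/(1-4q) for 0 ≤ q < 1/8. Then 2(1 + iL)·q·dL/dq = (i + L)(L^2 - 1). -/
/-!
Write `s = √(1 - 8q)` and `d = 1 - 4q`, so that `L = (4iq + s)/d`. Using `i² = -1`
and `s² = 1 - 8q`, the three factors of the equation become
`1 + iL = s(s + i)/d`, `i + L = (s + i)/d`, `L² - 1 = 8q(is - 4q)/d²`,
while `dL/dq = 4(is - 4q)/(s d²)` because `ds/dq = -4/s`. Both sides then equal `8q(s + i)(is - 4q)/d³`.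
-/

open Complex

section Field

variable {K : Type*} [Field K] {i q s : K}

def closedFormL (i q s : K) : K := (4 * i * q + s) / (1 - 4 * q)

lemma one_add_mul_closedFormL (hi : i ^ 2 = -1) (hs : s ^ 2 = 1 - 8 * q) (hd : 1 - 4 * q ≠ 0) :
    1 + i * closedFormL i q s = s * (s + i) / (1 - 4 * q) := by
  unfold closedFormL
  field_simp
  linear_combination (4 * q) * hi - hs

lemma add_closedFormL (hd : 1 - 4 * q ≠ 0) :
    i + closedFormL i q s = (s + i) / (1 - 4 * q) := by
  unfold closedFormL
  field_simp
  ring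

lemma closedFormL_sq_sub_one (hi : i ^ 2 = -1) (hs : s ^ 2 = 1 - 8 * q) (hd : 1 - 4 * q ≠ 0) :
    closedFormL i q s ^ 2 - 1 = 8 * q * (i * s - 4 * q) / (1 - 4 * q) ^ 2 := by
  unfold closedFormL
  field_simp
  linear_combination (16 * q ^ 2) * hi + hs

theorem closedFormL_ode (hi : i ^ 2 = -1) (hs : s ^ 2 = 1 - 8 * q) (hs0 : s ≠ 0)
    (hd : 1 - 4 * q ≠ 0) :
    2 * (1 + i * closedFormL i q s) * (q * (4 * (i * s - 4 * q) / (s * (1 - 4 * q) ^ 2))) =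
      (i + closedFormL i q s) * (closedFormL i q s ^ 2 - 1) := by
  rw [one_add_mul_closedFormL hi hs hd, add_closedFormL hd, closedFormL_sq_sub_one hi hs hd]
  field_simp
  ring

end Field

section Real

variable {q : ℝ} (hq : q < 1 / 8)
include hq

lemma ofReal_sqrt_one_sub_eight_mul_sq : (Real.sqrt (1 - 8 * q) : ℂ) ^ 2 = 1 - 8 * q := by
  exact_mod_cast Real.sq_sqrt (by linarith)

lemma ofReal_sqrt_one_sub_eight_mul_ne_zero : (Real.sqrt (1 - 8 * q) : ℂ) ≠ 0 := by
  exact_mod_cast (Real.sqrt_pos.mpr (by linarith)).ne'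

lemma one_sub_four_mul_ne_zero : (1 : ℂ) - 4 * q ≠ 0 := by
  exact_mod_cast (by linarith : (1 : ℝ) - 4 * q ≠ 0)

lemma hasDerivAt_closedFormL :
    HasDerivAt (fun x : ℝ => closedFormL I (x : ℂ) (Real.sqrt (1 - 8 * x)))
      (4 * (I * Real.sqrt (1 - 8 * q) - 4 * q) /
        (Real.sqrt (1 - 8 * q) * (1 - 4 * (q : ℂ)) ^ 2)) q := by
  have hsqrt : HasDerivAt (fun x : ℝ => (Real.sqrt (1 - 8 * x) : ℂ))
      ((-8 / (2 * Real.sqrt (1 - 8 * q)) : ℝ) : ℂ) q :=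
    (((hasDerivAt_id q).const_mul 8).const_sub 1 |>.sqrt (by rw [id]; linarith) |>.congr_deriv
      (by simp)).ofReal_comp
  have hid : HasDerivAt (fun x : ℝ => (x : ℂ)) 1 q := by
    simpa using (hasDerivAt_id q).ofReal_comp
  have hnum := (hid.const_mul (4 * I)).fun_add hsqrt
  have hden := (hid.const_mul 4).const_sub 1
  have hd := one_sub_four_mul_ne_zero hq
  have hs0 := ofReal_sqrt_one_sub_eight_mul_ne_zero hq
  refine (hnum.div hden hd).congr_deriv ?_
  push_cast
  field_simp
  linear_combination 8 * ofReal_sqrt_one_sub_eight_mul_sq hq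

end Real

/-- with `L q = (4 i q + √(1-8q))/(1-4q)` for real `0 ≤ q < 1/8`,
`2 (1 + i L) · q · dL/dq = (i + L)(L^2 - 1)`. -/
theorem stmt8 (L : ℝ → ℂ)
    (hL : ∀ q : ℝ, L q = (4 * I * q + (Real.sqrt (1 - 8 * q) : ℂ)) / (1 - 4 * q)) :
    ∀ q : ℝ, 0 ≤ q → q < 1/8 →
      2 * (1 + I * L q) * ((q : ℂ) * deriv L q) = (I + L q) * ((L q) ^ 2 - 1) := by
  intro q _ hq
  have hLfun : L = fun x : ℝ => closedFormL I (x : ℂ) (Real.sqrt (1 - 8 * x)) := funext hL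
  rw [hLfun, (hasDerivAt_closedFormL hq).deriv]
  exact closedFormL_ode I_sq (ofReal_sqrt_one_sub_eight_mul_sq hq)
    (ofReal_sqrt_one_sub_eight_mul_ne_zero hq) (one_sub_four_mul_ne_zero hq)
end

section
/- Define formal power series over ℂ: I_1^E(q) = 3·∑_{d≥1} (3d-1)!/(d!)^3 q^d, B_1' = q·(d/dq) I_1^E, X = (q·(d/dq) B_1')/(1 + B_1'), and L(q) = (1-27q)^{-1/3}. Then X^2 - (L^3 - 1)X + q·(dX/dq) - (2/9)(L^3 - 1) = 0. -/
/-! Write `θ = q d/dq` and `F = 1 + B₁' = ∑ (3n)!/(n!)³ qⁿ`. The coefficient recurrence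
`(n+1)² aₙ₊₁ = 3(3n+1)(3n+2) aₙ` of `F` is the hypergeometric equation
`(1 - 27q) θ²F = 27q θF + 6q F`. Since `X = θF / F` is a logarithmic derivative,
`X² + θX = θ²F / F = 27q/(1-27q) · X + 6q/(1-27q)`, and `L³ - 1 = 27q/(1-27q)`. -/

open PowerSeries

namespace PowerSeries

theorem coeff_X_mul_derivative {R : Type*} [CommSemiring R] (f : R⟦X⟧) (n : ℕ) :
    coeff n (X * d⁄dX R f) = n * coeff n f := by
  cases n with
  | zero => simp [coeff_zero_eq_constantCoeff]
  | succ m =>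
    rw [coeff_succ_X_mul, coeff_derivative]
    push_cast
    ring

theorem sq_add_X_mul_derivative_mul_eq {R : Type*} [CommRing R] {F y : R⟦X⟧}
    (hy : y * F = X * d⁄dX R F) :
    (y ^ 2 + X * d⁄dX R y) * F = X * d⁄dX R (X * d⁄dX R F) := by
  rw [← hy, Derivation.leibniz, smul_eq_mul, smul_eq_mul]
  linear_combination y * hy

theorem ode_of_coeff_succ_recurrence {R : Type*} [CommRing R] (F : R⟦X⟧)
    (hF : ∀ n : ℕ, ((n : R) + 1) ^ 2 * coeff (n + 1) F
      = (27 * (n : R) ^ 2 + 27 * n + 6) * coeff n F) :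
    (1 - 27 * X) * (X * d⁄dX R (X * d⁄dX R F)) = 27 * X * (X * d⁄dX R F) + 6 * X * F := by
  rw [← map_ofNat C 27, ← map_ofNat C 6]
  ext n
  cases n with
  | zero => simp [coeff_zero_eq_constantCoeff]
  | succ n =>
    simp only [sub_mul, one_mul, mul_assoc, map_sub, map_add, coeff_C_mul, coeff_X_mul_derivative]
    simp only [coeff_succ_X_mul, coeff_X_mul_derivative]
    push_cast
    linear_combination hF n

section ThreeMultinomial

variable (K : Type*) [Field K]

def threeMultinomialSeries : K⟦X⟧ :=
  mk fun n => ((3 * n).factorial : K) / (n.factorial : K) ^ 3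

variable {K}

theorem one_add_X_mul_derivative_eq_threeMultinomialSeries :
    1 + X * d⁄dX K (mk fun d =>
      if d = 0 then 0 else 3 * ((3 * d - 1).factorial : K) / (d.factorial : K) ^ 3)
      = threeMultinomialSeries K := by
  ext n
  rw [map_add, coeff_X_mul_derivative, coeff_mk, threeMultinomialSeries, coeff_mk, coeff_one]
  rcases Nat.eq_zero_or_pos n with rfl | hn
  · simp
  · rw [if_neg hn.ne', if_neg hn.ne', ← Nat.mul_factorial_pred (by omega : 3 * n ≠ 0)]
    push_cast
    ring

variable [CharZero K]

theorem threeMultinomialSeries_coeff_succ (n : ℕ) :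
    ((n : K) + 1) ^ 2 * coeff (n + 1) (threeMultinomialSeries K)
      = (27 * (n : K) ^ 2 + 27 * n + 6) * coeff n (threeMultinomialSeries K) := by
  have h3 : (3 * (n + 1)).factorial
      = (3 * n + 3) * (3 * n + 2) * (3 * n + 1) * (3 * n).factorial := by
    rw [show 3 * (n + 1) = 3 * n + 2 + 1 by ring, Nat.factorial_succ, Nat.factorial_succ,
      Nat.factorial_succ]
    ring
  have hn : (n.factorial : K) ≠ 0 := Nat.cast_ne_zero.mpr n.factorial_ne_zero
  have hn1 : (n : K) + 1 ≠ 0 := Nat.cast_add_one_ne_zero n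
  simp only [threeMultinomialSeries, coeff_mk, h3, Nat.factorial_succ]
  push_cast
  field_simp
  ring

end ThreeMultinomial

end PowerSeries

theorem stmt12_general
    (I₁ : ℂ⟦X⟧)
    (hI₁ : I₁ = PowerSeries.mk fun d =>
      if d = 0 then 0 else 3 * ((3 * d - 1).factorial : ℂ) / ((d.factorial : ℂ)) ^ 3)
    (B₁' Xs L : ℂ⟦X⟧)
    (hB : B₁' = PowerSeries.X * d⁄dX ℂ I₁)
    (hX : Xs = (PowerSeries.X * d⁄dX ℂ B₁') * (1 + B₁')⁻¹)
    (hL : L ^ 3 * (1 - 27 * PowerSeries.X) = 1) :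
    Xs ^ 2 - (L ^ 3 - 1) * Xs + PowerSeries.X * d⁄dX ℂ Xs
      - (PowerSeries.C (R := ℂ) (2/9)) * (L ^ 3 - 1) = 0 := by
  have hF : 1 + B₁' = threeMultinomialSeries ℂ := by
    rw [hB, hI₁, one_add_X_mul_derivative_eq_threeMultinomialSeries]
  have hF0 : constantCoeff (1 + B₁') ≠ 0 := by simp [hF, threeMultinomialSeries]
  have hXs : Xs * (1 + B₁') = X * d⁄dX ℂ (1 + B₁') := by
    rw [hX, map_add, Derivation.map_one_eq_zero, zero_add, mul_assoc,
      PowerSeries.inv_mul_cancel _ hF0, mul_one]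
  have hODE := ode_of_coeff_succ_recurrence _ (hF ▸ threeMultinomialSeries_coeff_succ)
  have hRiccati := sq_add_X_mul_derivative_mul_eq hXs
  generalize 1 + B₁' = F at *
  have hc : C (2 / 9 : ℂ) * 27 = 6 := by
    rw [← map_ofNat C 27, ← map_mul, ← map_ofNat C 6]
    norm_num
  have hne : F * (1 - 27 * X) ≠ 0 := by
    refine mul_ne_zero (ne_of_apply_ne constantCoeff (by simpa using hF0)) ?_
    exact ne_of_apply_ne constantCoeff (by simp)
  refine (mul_eq_zero.mp ?_).resolve_right hne
  linear_combination (1 - 27 * X) * hRiccati + hODE - 27 * X * hXs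
    - (Xs * F + C (2 / 9 : ℂ) * F) * hL - X * F * hc

/-- over `ℂ⟦q⟧`, with `I₁ᴱ = 3 ∑_{d≥1} (3d-1)!/(d!)³ qᵈ`,
`B₁' = q·d(I₁ᴱ)/dq`, `X = (q·d(B₁')/dq)/(1+B₁')`, and `L = (1-27q)^{-1/3}`
(characterized by `L³(1-27q) = 1` with constant term `1`), one has
`X² - (L³-1)X + q·dX/dq - (2/9)(L³-1) = 0`. -/
theorem stmt12
    (I₁ : ℂ⟦X⟧)
    (hI₁ : I₁ = PowerSeries.mk fun d =>
      if d = 0 then 0 else 3 * ((3 * d - 1).factorial : ℂ) / ((d.factorial : ℂ)) ^ 3)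
    (B₁' Xs L : ℂ⟦X⟧)
    (hB : B₁' = PowerSeries.X * d⁄dX ℂ I₁)
    (hX : Xs = (PowerSeries.X * d⁄dX ℂ B₁') * (1 + B₁')⁻¹)
    (hL : L ^ 3 * (1 - 27 * PowerSeries.X) = 1)
    (hL0 : PowerSeries.constantCoeff (R := ℂ) L = 1) :
    Xs ^ 2 - (L ^ 3 - 1) * Xs + PowerSeries.X * d⁄dX ℂ Xs
      - (PowerSeries.C (R := ℂ) (2/9)) * (L ^ 3 - 1) = 0 :=
  stmt12_general I₁ hI₁ B₁' Xs L hB hX hL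
end

section
/- Define formal power series over ℂ: I_1^{K3}(q) = (4·∑_{d≥1} (4d)!/(d!)^4 (∑_{r=d+1}^{4d} 1/r) q^d) / (∑_{d≥0} (4d)!/(d!)^4 q^d), A_1' = q·(d/dq) I_1^{K3}, X = (q·(d/dq) A_1')/(1 + A_1'), and L(q) = (1-256q)^{-1/4}. Then X^2 - 2·q·(dX/dq) + (1/16)(12L^8 - 11L^4 - 1) = 0. -/
/-!
Let `F = ∑ (4d)!/(d!)⁴ qᵈ` and `G = ∑ 4 (4d)!/(d!)⁴ (H_{4d} - H_d) qᵈ`, so that `I₁ = G/F`; by the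
Frobenius method `F` and `F log q + G` are solutions of the Picard–Fuchs operator
`𝓛 = θ³ - 4q(4θ+1)(4θ+2)(4θ+3)`. This operator is a symmetric square: the bilinear form `B` of
`picardFuchsForm` satisfies `θ B(u, v) = u 𝓛v + v 𝓛u`, so it is constant on solutions. Evaluating
it on `F` and `G` gives three quadratic relations whose combination is
`(1 - 256q) (F² (1 + A₁'))² = F²`, i.e. `(1 + A₁') F = L²`. Hence
`X = θ log (L² / F) = 128q / (1 - 256q) - θF / F`, and `B(F, F) = 0` is exactly the Riccati
equation claimed for `X`.
-/

open PowerSeries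

theorem Derivation.leibniz_div_of_mul_eq_one {R A : Type*} [CommRing R] [CommRing A]
    [Algebra R A] (D : Derivation R A A) {a b : A} (h : a * b = 1) (g : A) :
    D (g * b) * a ^ 2 = a * D g - g * D a := by
  rw [D.leibniz, D.leibniz_of_mul_eq_one (a := b) (by rwa [mul_comm])]
  simp only [smul_eq_mul]
  linear_combination (D g * a - g * b * a * D a - g * D a) * h

@[simp]
theorem Derivation.map_ofNat {R A : Type*} [CommSemiring R] [CommSemiring A]
    [Algebra R A] (D : Derivation R A A) (n : ℕ) [n.AtLeastTwo] :
    D (no_index (OfNat.ofNat n : A)) = 0 :=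
  D.map_natCast n

noncomputable section

namespace PowerSeries

variable (R : Type*) [CommRing R]

def theta : Derivation R R⟦X⟧ R⟦X⟧ := (X : R⟦X⟧) • d⁄dX R

variable {R}

local notation "θ" => theta R

theorem theta_apply (f : R⟦X⟧) : θ f = X * d⁄dX R f := rfl

theorem coeff_theta (n : ℕ) (f : R⟦X⟧) : coeff n (θ f) = n * coeff n f := by
  cases n with
  | zero => simp [theta_apply]
  | succ m => rw [theta_apply, coeff_succ_X_mul, coeff_derivative]; push_cast; ring

@[simp]
theorem constantCoeff_theta (f : R⟦X⟧) : constantCoeff (θ f) = 0 := by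
  simp [theta_apply]

@[simp]
theorem theta_X : θ (X : R⟦X⟧) = X := by simp [theta_apply]

theorem eq_of_theta_eq [IsDomain R] [CharZero R] {f g : R⟦X⟧} (h : θ f = θ g)
    (h₀ : constantCoeff f = constantCoeff g) : f = g := by
  ext n
  rcases n with _ | n
  · simpa using h₀
  · have := congrArg (coeff (n + 1)) h
    simp only [coeff_theta] at this
    exact mul_left_cancel₀ (Nat.cast_ne_zero.mpr n.succ_ne_zero) this

end PowerSeries

namespace QuarticK3

open Finset

section PicardFuchs

variable {R : Type*} [CommRing R]

local notation "θ" => theta R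

def picardFuchs (f : R⟦X⟧) : R⟦X⟧ :=
  θ (θ (θ f)) - X * (256 * θ (θ (θ f)) + 384 * θ (θ f) + 176 * θ f + 24 * f)

def picardFuchsForm (u v : R⟦X⟧) : R⟦X⟧ :=
  (1 - 256 * X) * (u * θ (θ v) + v * θ (θ u) - θ u * θ v)
    - 128 * X * (u * θ v + v * θ u) - 48 * X * u * v

theorem theta_picardFuchsForm (u v : R⟦X⟧) :
    θ (picardFuchsForm u v) = u * picardFuchs v + v * picardFuchs u := by
  simp only [picardFuchsForm, picardFuchs, Derivation.leibniz, smul_eq_mul, map_add, map_sub,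
    Derivation.map_one_eq_zero, Derivation.map_ofNat, theta_X]
  ring

theorem coeff_succ_picardFuchs (f : R⟦X⟧) (n : ℕ) :
    coeff (n + 1) (picardFuchs f) = ((n : R) + 1) ^ 3 * coeff (n + 1) f
      - (256 * n ^ 3 + 384 * n ^ 2 + 176 * n + 24) * coeff n f := by
  simp only [picardFuchs, map_sub, coeff_succ_X_mul, map_add, ← map_ofNat (C (R := R)),
    coeff_C_mul, coeff_theta]
  push_cast
  ring

@[simp]
theorem constantCoeff_picardFuchs (f : R⟦X⟧) : constantCoeff (picardFuchs f) = 0 := by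
  simp [picardFuchs]

@[simp]
theorem constantCoeff_picardFuchsForm (u v : R⟦X⟧) :
    constantCoeff (picardFuchsForm u v) = 0 := by
  simp [picardFuchsForm]

end PicardFuchs

theorem sum_Icc_one_div_eq_harmonic_sub {K : Type*} [Field K] [CharZero K] {m n : ℕ}
    (h : m ≤ n) : ∑ r ∈ Icc (m + 1) n, 1 / (r : K) = ((harmonic n - harmonic m : ℚ) : K) := by
  induction n, h using Nat.le_induction with
  | base => simp
  | succ n hmn ih =>
    rw [sum_Icc_succ_top (by omega), ih, harmonic_succ]
    push_cast
    ring

def periodCoeff (d : ℕ) : ℂ := ((4 * d).factorial : ℂ) / (d.factorial : ℂ) ^ 4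

def periodCoeff₁ (d : ℕ) : ℂ :=
  4 * periodCoeff d * ((harmonic (4 * d) - harmonic d : ℚ) : ℂ)

theorem periodCoeff_succ (n : ℕ) :
    ((n : ℂ) + 1) ^ 3 * periodCoeff (n + 1)
      = 4 * (4 * n + 1) * (4 * n + 2) * (4 * n + 3) * periodCoeff n := by
  have h4 : 4 * (n + 1) = 4 * n + 3 + 1 := by ring
  simp only [periodCoeff, h4, Nat.factorial_succ]
  push_cast
  field_simp
  ring

theorem harmonic_four_mul_succ (n : ℕ) :
    harmonic (4 * (n + 1)) = harmonic (4 * n)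
      + 1 / (4 * n + 1) + 1 / (4 * n + 2) + 1 / (4 * n + 3) + 1 / (4 * n + 4) := by
  simp only [show 4 * (n + 1) = 4 * n + 3 + 1 by ring, harmonic_succ]
  push_cast
  ring

theorem periodCoeff₁_succ (n : ℕ) :
    ((n : ℂ) + 1) ^ 3 * periodCoeff₁ (n + 1) =
      (256 * n ^ 3 + 384 * n ^ 2 + 176 * n + 24) * periodCoeff₁ n
        + (768 * n ^ 2 + 768 * n + 176) * periodCoeff n
        - 3 * (n + 1) ^ 2 * periodCoeff (n + 1) := by
  have hn : ((n : ℂ) + 1) ≠ 0 := n.cast_add_one_ne_zero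
  have hc : periodCoeff (n + 1)
      = 4 * (4 * n + 1) * (4 * n + 2) * (4 * n + 3) * periodCoeff n / ((n : ℂ) + 1) ^ 3 :=
    eq_div_of_mul_eq (pow_ne_zero 3 hn) (by rw [mul_comm]; exact periodCoeff_succ n)
  -- the nonvanishing facts are stated in the normal form that `field_simp` looks for
  have h1 : (n : ℂ) * 4 + 1 ≠ 0 := by norm_cast
  have h2 : (n : ℂ) * 4 + 2 ≠ 0 := by norm_cast
  have h3 : (n : ℂ) * 4 + 3 ≠ 0 := by norm_cast
  simp only [periodCoeff₁, harmonic_four_mul_succ, harmonic_succ, hc]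
  push_cast
  field_simp
  ring

def period₀ : ℂ⟦X⟧ := mk periodCoeff

def period₁ : ℂ⟦X⟧ := mk periodCoeff₁

local notation "θ" => theta ℂ

theorem picardFuchs_period₀ : picardFuchs period₀ = 0 := by
  ext (_ | n)
  · simp
  · rw [coeff_succ_picardFuchs]
    simp only [period₀, coeff_mk, map_zero]
    linear_combination periodCoeff_succ n

theorem picardFuchs_period₁ : picardFuchs period₁
    = X * (768 * θ (θ period₀) + 768 * θ period₀ + 176 * period₀) - 3 * θ (θ period₀) := by
  ext (_ | n)
  · simp
  · rw [coeff_succ_picardFuchs]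
    simp only [period₀, period₁, coeff_mk, map_sub, map_add, coeff_succ_X_mul,
      ← map_ofNat (C (R := ℂ)), coeff_C_mul, coeff_theta]
    push_cast
    linear_combination periodCoeff₁_succ n

@[simp]
theorem constantCoeff_period₀ : constantCoeff period₀ = 1 := by
  simp [period₀, periodCoeff]

@[simp]
theorem constantCoeff_period₁ : constantCoeff period₁ = 0 := by
  simp [period₁, periodCoeff₁]

theorem picardFuchsForm_period₀_period₀ : picardFuchsForm period₀ period₀ = 0 :=
  eq_of_theta_eq (by rw [theta_picardFuchsForm, picardFuchs_period₀, map_zero]; ring) (by simp)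

theorem two_mul_picardFuchsForm_period₀_period₁ :
    2 * picardFuchsForm period₀ period₁ = -θ ((1 - 256 * X) * period₀ ^ 2) := by
  refine eq_of_theta_eq ?_ (by simp)
  have hFF := picardFuchsForm_period₀_period₀
  rw [picardFuchsForm] at hFF
  simp only [Derivation.leibniz, theta_picardFuchsForm, picardFuchs_period₀, picardFuchs_period₁,
    map_add, map_sub, map_neg, map_zero, smul_eq_mul, Derivation.map_ofNat,
    Derivation.map_one_eq_zero, theta_X, pow_two]
  linear_combination (-2) * hFF

theorem picardFuchsForm_period₁_period₁ : picardFuchsForm period₁ period₁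
    = (1 - 256 * X) * (period₀ ^ 2 + 2 * period₀ * θ period₁ - 4 * period₁ * θ period₀)
      + 256 * X * period₀ * period₁ - 1 := by
  refine eq_of_theta_eq ?_ (by simp)
  have hFG := two_mul_picardFuchsForm_period₀_period₁
  rw [picardFuchsForm] at hFG
  simp only [Derivation.leibniz, theta_picardFuchsForm, picardFuchs_period₁,
    map_add, map_sub, smul_eq_mul, Derivation.map_ofNat, Derivation.map_one_eq_zero, theta_X,
    pow_two] at hFG ⊢
  linear_combination -hFG

theorem wronskian_sq :
    (1 - 256 * X) * (period₀ ^ 2 + period₀ * θ period₁ - period₁ * θ period₀) ^ 2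
      = period₀ ^ 2 := by
  have hFF := picardFuchsForm_period₀_period₀
  have hFG := two_mul_picardFuchsForm_period₀_period₁
  have hGG := picardFuchsForm_period₁_period₁
  simp only [picardFuchsForm] at hFF hFG hGG
  simp only [Derivation.leibniz, map_sub, smul_eq_mul, Derivation.map_ofNat,
    Derivation.map_one_eq_zero, theta_X, pow_two] at hFG
  linear_combination (-period₁ ^ 2) * hFF + (period₀ * period₁) * hFG - period₀ ^ 2 * hGG

theorem period₁_eq : period₁ = mk fun d =>
    4 * ((4 * d).factorial : ℂ) / (d.factorial : ℂ) ^ 4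
      * ∑ r ∈ Icc (d + 1) (4 * d), 1 / (r : ℂ) := by
  ext d
  rw [period₁, coeff_mk, coeff_mk, periodCoeff₁, periodCoeff,
    sum_Icc_one_div_eq_harmonic_sub (by omega)]
  ring

theorem theta_eq_of_mul_sq_eq_one {u : ℂ⟦X⟧} (h : (1 - 256 * X) * u ^ 2 = 1) :
    (1 - 256 * X) * θ u = 128 * X * u := by
  have hu : u ≠ 0 := by rintro rfl; simp at h
  have h2 : (2 : ℂ⟦X⟧) ≠ 0 := fun h => by simpa [map_ofNat] using congrArg constantCoeff h
  have hθ := congrArg θ h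
  simp only [Derivation.leibniz, map_sub, smul_eq_mul, Derivation.map_ofNat,
    Derivation.map_one_eq_zero, theta_X, pow_two] at hθ
  refine mul_left_cancel₀ (mul_ne_zero h2 hu) ?_
  linear_combination hθ

theorem riccati_of_mul_period₀_eq {Y L : ℂ⟦X⟧}
    (hY : (1 - 256 * X) * period₀ * Y = 128 * X * period₀ - (1 - 256 * X) * θ period₀)
    (hL : L ^ 4 * (1 - 256 * X) = 1) :
    Y ^ 2 - 2 * θ Y + C (1 / 16 : ℂ) * (12 * L ^ 8 - 11 * L ^ 4 - 1) = 0 := by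
  have hFF := picardFuchsForm_period₀_period₀
  rw [picardFuchsForm] at hFF
  have hθY := congrArg θ hY
  simp only [Derivation.leibniz, map_sub, smul_eq_mul, Derivation.map_ofNat,
    Derivation.map_one_eq_zero, theta_X] at hθY
  have hL8 : L ^ 8 * (1 - 256 * X) ^ 2 = 1 := by
    linear_combination (L ^ 4 * (1 - 256 * X) + 1) * hL
  have h16 : C (1 / 16 : ℂ) * 16 = 1 := by
    rw [← map_ofNat C 16, ← map_mul]; norm_num
  have hne : (16 * ((1 - 256 * X) ^ 2 * period₀ ^ 2) : ℂ⟦X⟧) ≠ 0 :=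
    fun h => by simpa [map_ofNat] using congrArg constantCoeff h
  refine mul_right_cancel₀ hne ?_
  linear_combination 16 * (1 - 256 * X) * hFF
      + (16 * (Y * (1 - 256 * X) * period₀ + 128 * X * period₀ - (1 - 256 * X) * θ period₀
        - 512 * X * period₀ + 2 * (1 - 256 * X) * θ period₀)) * hY
      - 32 * (1 - 256 * X) * period₀ * hθY - 11 * (1 - 256 * X) * period₀ ^ 2 * hL
      + 12 * period₀ ^ 2 * hL8
      + ((12 * L ^ 8 - 11 * L ^ 4 - 1) * ((1 - 256 * X) ^ 2 * period₀ ^ 2)) * h16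

end QuarticK3

end

open QuarticK3 in
theorem stmt13_general
    (I₁ : ℂ⟦X⟧)
    (hI₁ : I₁ =
      (PowerSeries.mk fun d =>
        4 * ((4 * d).factorial : ℂ) / ((d.factorial : ℂ)) ^ 4 *
          ∑ r ∈ Finset.Icc (d + 1) (4 * d), (1 / (r : ℂ))) *
      (PowerSeries.mk fun d =>
        ((4 * d).factorial : ℂ) / ((d.factorial : ℂ)) ^ 4)⁻¹)
    (A₁' Xs L : ℂ⟦X⟧)
    (hA : A₁' = PowerSeries.X * d⁄dX ℂ I₁)
    (hX : Xs = (PowerSeries.X * d⁄dX ℂ A₁') * (1 + A₁')⁻¹)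
    (hL : L ^ 4 * (1 - 256 * PowerSeries.X) = 1) :
    Xs ^ 2 - 2 * (PowerSeries.X * d⁄dX ℂ Xs)
      + (PowerSeries.C (R := ℂ) (1/16)) * (12 * L ^ 8 - 11 * L ^ 4 - 1) = 0 := by
  have hF : constantCoeff period₀ ≠ 0 := by simp
  have hw : constantCoeff (1 + A₁') ≠ 0 := by simp [hA, ← theta_apply]
  have hF₀ : period₀ ≠ 0 := ne_of_apply_ne constantCoeff (by rwa [map_zero])
  have hw₀ : 1 + A₁' ≠ 0 := ne_of_apply_ne constantCoeff (by rwa [map_zero])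
  have hI : I₁ = period₁ * period₀⁻¹ := by rw [hI₁, period₁_eq]; rfl
  have hAF : A₁' * period₀ ^ 2 = period₀ * theta ℂ period₁ - period₁ * theta ℂ period₀ := by
    rw [hA, ← theta_apply, hI]
    exact (theta ℂ).leibniz_div_of_mul_eq_one (PowerSeries.mul_inv_cancel _ hF) _
  have hwF : (1 - 256 * X) * ((1 + A₁') * period₀) ^ 2 = 1 := by
    refine mul_left_cancel₀ (pow_ne_zero 2 hF₀) ?_
    linear_combination wronskian_sq + (1 - 256 * X) * ((1 + A₁') * period₀ ^ 2
      + (period₀ ^ 2 + period₀ * theta ℂ period₁ - period₁ * theta ℂ period₀)) * hAF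
  have hXw : Xs * (1 + A₁') = theta ℂ (1 + A₁') := by
    rw [hX, mul_assoc, PowerSeries.inv_mul_cancel _ hw, mul_one, map_add,
      Derivation.map_one_eq_zero, zero_add, theta_apply]
  have hY : (1 - 256 * X) * period₀ * Xs
      = 128 * X * period₀ - (1 - 256 * X) * theta ℂ period₀ := by
    have h := theta_eq_of_mul_sq_eq_one hwF
    rw [Derivation.leibniz, ← hXw, smul_eq_mul, smul_eq_mul] at h
    refine mul_left_cancel₀ hw₀ ?_
    linear_combination h
  simpa only [theta_apply] using riccati_of_mul_period₀_eq hY hL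

/-- over `ℂ⟦q⟧`, with
`I₁ᴷ³ = (4 ∑_{d≥1} (4d)!/(d!)⁴ (∑_{r=d+1}^{4d} 1/r) qᵈ) / (∑_{d≥0} (4d)!/(d!)⁴ qᵈ)`,
`A₁' = q·d(I₁ᴷ³)/dq`, `X = (q·d(A₁')/dq)/(1+A₁')`, and `L = (1-256q)^{-1/4}`
(characterized by `L⁴(1-256q) = 1` with constant term `1`), one has
`X² - 2 q·dX/dq + (1/16)(12L⁸ - 11L⁴ - 1) = 0`. -/
theorem stmt13
    (I₁ : ℂ⟦X⟧)
    (hI₁ : I₁ =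
      (PowerSeries.mk fun d =>
        4 * ((4 * d).factorial : ℂ) / ((d.factorial : ℂ)) ^ 4 *
          ∑ r ∈ Finset.Icc (d + 1) (4 * d), (1 / (r : ℂ))) *
      (PowerSeries.mk fun d =>
        ((4 * d).factorial : ℂ) / ((d.factorial : ℂ)) ^ 4)⁻¹)
    (A₁' Xs L : ℂ⟦X⟧)
    (hA : A₁' = PowerSeries.X * d⁄dX ℂ I₁)
    (hX : Xs = (PowerSeries.X * d⁄dX ℂ A₁') * (1 + A₁')⁻¹)
    (hL : L ^ 4 * (1 - 256 * PowerSeries.X) = 1)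
    (hL0 : PowerSeries.constantCoeff (R := ℂ) L = 1) :
    Xs ^ 2 - 2 * (PowerSeries.X * d⁄dX ℂ Xs)
      + (PowerSeries.C (R := ℂ) (1/16)) * (12 * L ^ 8 - 11 * L ^ 4 - 1) = 0 :=
  stmt13_general I₁ hI₁ A₁' Xs L hA hX hL
end
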